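/- arXiv:2411.07912 — 6 statements merged into one kernel-verified Lean document; each statement's English description precedes it below -/
import Mathlib

section
/- Let X be a set and let d, d' be (extended) metrics on X. Then the bounded coarse structure of d is contained in the bounded coarse structure of d' if and only if there exists a non-decreasing function ρ: ℝ₊ → ℝ₊ ∪ {∞} such that d'(x,y) ≤ ρ(d(x,y)) for all x, y ∈ X (interpreting ρ(∞) = ∞). -/
open scoped ENNReal NNReal

/-- An abstract coarse structure on a set `X`. -/
structure CoarseStructure (X : Type*) where
  sets : Set (Set (X × X))
  diag_mem : {p : X × X | p.1 = p.2} ∈ sets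
  subset_mem : ∀ E F : Set (X × X), E ∈ sets → F ⊆ E → F ∈ sets
  union_mem : ∀ E F : Set (X × X), E ∈ sets → F ∈ sets → E ∪ F ∈ sets
  inv_mem : ∀ E : Set (X × X), E ∈ sets → {p : X × X | (p.2, p.1) ∈ E} ∈ sets
  comp_mem : ∀ E F : Set (X × X), E ∈ sets → F ∈ sets →
    {p : X × X | ∃ y, (p.1, y) ∈ E ∧ (y, p.2) ∈ F} ∈ sets

/-- The bounded coarse structure of an extended metric: the controlled sets are those on which
`d` is bounded (by a finite constant). -/
def boundedCoarse {X : Type*} (d : X → X → ℝ≥0∞) : Set (Set (X × X)) :=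
  {E | ∃ M : ℝ≥0, ∀ p ∈ E, d p.1 p.2 ≤ (M : ℝ≥0∞)}

/-- The bounded coarse structure of `d` is contained in that of `d'` iff there is a
non-decreasing `ρ : ℝ₊ → ℝ₊ ∪ {∞}` (finite on finite values, with `ρ ∞ = ∞`) such that
`d' x y ≤ ρ (d x y)` for all `x y`. -/
theorem bounded_coarse_subset_iff {X : Type*} (d d' : X → X → ℝ≥0∞)
    (hd0 : ∀ x, d x x = 0) (hddef : ∀ x y, d x y = 0 → x = y)
    (hdsymm : ∀ x y, d x y = d y x) (hdtri : ∀ x y z, d x z ≤ d x y + d y z)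
    (hd'0 : ∀ x, d' x x = 0) (hd'def : ∀ x y, d' x y = 0 → x = y)
    (hd'symm : ∀ x y, d' x y = d' y x) (hd'tri : ∀ x y z, d' x z ≤ d' x y + d' y z) :
    boundedCoarse d ⊆ boundedCoarse d' ↔
      ∃ ρ : ℝ≥0∞ → ℝ≥0∞, Monotone ρ ∧ (∀ r : ℝ≥0∞, r ≠ ⊤ → ρ r ≠ ⊤) ∧ ρ ⊤ = ⊤ ∧
        ∀ x y : X, d' x y ≤ ρ (d x y) := by
  constructor
  · intro h
    refine ⟨fun r => if r = ⊤ then ⊤ else ⨆ (x : X) (y : X) (_ : d x y ≤ r), d' x y,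
      ?_, ?_, if_pos rfl, ?_⟩
    · intro a b hab
      by_cases hb : b = ⊤
      · simp [hb]
      · have ha : a ≠ ⊤ := fun h' => hb (top_le_iff.mp (h' ▸ hab))
        simp only [ha, hb, if_neg, ite_false]
        refine iSup_mono fun x => iSup_mono fun y => ?_
        exact iSup_le fun hxy => le_iSup_of_le (hxy.trans hab) le_rfl
    · intro r hr
      have hE : {p : X × X | d p.1 p.2 ≤ r} ∈ boundedCoarse d :=
        ⟨r.toNNReal, fun p hp => hp.trans_eq (ENNReal.coe_toNNReal hr).symm⟩
      obtain ⟨M', hM'⟩ := h hE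
      simp only [hr, ite_false]
      refine ne_top_of_le_ne_top (ENNReal.coe_ne_top (r := M')) ?_
      exact iSup_le fun x => iSup_le fun y => iSup_le fun hxy => hM' (x, y) hxy
    · intro x y
      by_cases hxy : d x y = ⊤
      · simp [hxy]
      · simp only [hxy, ite_false]
        exact le_iSup_of_le x (le_iSup_of_le y (le_iSup_of_le le_rfl le_rfl))
  · rintro ⟨ρ, hmono, hfin, htop, hbound⟩ E ⟨M, hM⟩
    refine ⟨(ρ M).toNNReal, fun p hp => ?_⟩
    exact (hbound _ _).trans ((hmono (hM p hp)).trans_eq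
      (ENNReal.coe_toNNReal (hfin M ENNReal.coe_ne_top)).symm)
end

section
/- For any function f: X × X → ℝ₊ ∪ {∞}, there exists a coarse structure E_f on X such that for every coarse structure E on X, f has controlled decay with respect to E if and only if E_f ⊆ E. -/
open scoped ENNReal NNReal

/-- `f` has controlled decay with respect to a coarse structure `C`: for every `ε > 0` there is a
controlled set off which `f < ε`. -/
def HasControlledDecay {X : Type*} (f : X → X → ℝ≥0∞) (C : CoarseStructure X) : Prop :=
  ∀ ε : ℝ≥0, 0 < ε → ∃ E₀ ∈ C.sets, ∀ p : X × X, p ∉ E₀ → f p.1 p.2 < (ε : ℝ≥0∞)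

/-- The sets of the coarse structure generated by the diagonal and the superlevel sets of `f`. -/
inductive GenSets {X : Type*} (f : X → X → ℝ≥0∞) : Set (X × X) → Prop
  | diag : GenSets f {p : X × X | p.1 = p.2}
  | base (ε : ℝ≥0) (hε : 0 < ε) : GenSets f {p : X × X | (ε : ℝ≥0∞) ≤ f p.1 p.2}
  | subset (E F : Set (X × X)) : GenSets f E → F ⊆ E → GenSets f F
  | union (E F : Set (X × X)) : GenSets f E → GenSets f F → GenSets f (E ∪ F)
  | inv (E : Set (X × X)) : GenSets f E → GenSets f {p : X × X | (p.2, p.1) ∈ E}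
  | comp (E F : Set (X × X)) : GenSets f E → GenSets f F →
      GenSets f {p : X × X | ∃ y, (p.1, y) ∈ E ∧ (y, p.2) ∈ F}

/-- For any `f : X × X → ℝ₊ ∪ {∞}` there is a universal coarse structure `E_f` such that `f` has
controlled decay with respect to a coarse structure `E` iff `E_f ⊆ E`. -/
theorem exists_universal_coarse_structure {X : Type*} (f : X → X → ℝ≥0∞) :
    ∃ Ef : CoarseStructure X, ∀ C : CoarseStructure X,
      HasControlledDecay f C ↔ Ef.sets ⊆ C.sets := by
  refine ⟨⟨{E | GenSets f E}, .diag, fun E F hE hFE => .subset E F hE hFE,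
    fun E F hE hF => .union E F hE hF, fun E hE => .inv E hE,
    fun E F hE hF => .comp E F hE hF⟩, fun C => ⟨fun hdecay E hE => ?_, fun hsub ε hε => ?_⟩⟩
  · induction hE with
    | diag => exact C.diag_mem
    | base ε hε =>
        obtain ⟨E₀, hE₀, h⟩ := hdecay ε hε
        exact C.subset_mem E₀ _ hE₀ fun p hp => by
          by_contra hpE₀; exact absurd (h p hpE₀) (not_lt.2 hp)
    | subset E F _ hFE ih => exact C.subset_mem E F ih hFE
    | union E F _ _ ihE ihF => exact C.union_mem E F ihE ihF
    | inv E _ ih => exact C.inv_mem E ih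
    | comp E F _ _ ihE ihF => exact C.comp_mem E F ihE ihF
  · exact ⟨{p : X × X | (ε : ℝ≥0∞) ≤ f p.1 p.2}, hsub (.base ε hε),
      fun p hp => not_le.1 hp⟩
end

section
/- Suppose a coarse structure E on X is monogenic with generator F, and let d_F be the path metric on the graph with vertex set X and edges {x,y} whenever (x,y) ∈ F or (y,x) ∈ F. Then for any other extended metric d' on X, E ⊆ E^{d'} if and only if there exists L > 0 such that d'(x,y) ≤ L·d_F(x,y) for all x,y. -/
open scoped ENNReal NNReal

def generatedCoarse {X : Type*} (S : Set (Set (X × X))) : Set (Set (X × X)) :=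
  {E | ∀ C : CoarseStructure X, S ⊆ C.sets → E ∈ C.sets}

/-- The path (extended) metric of the graph on `X` with edge relation `R`: the infimum of the
lengths of `R`-paths from `x` to `y` (`∞` if there is none). -/
noncomputable def pathMetric {X : Type*} (R : X → X → Prop) (x y : X) : ℝ≥0∞ :=
  sInf {n : ℝ≥0∞ | ∃ m : ℕ, n = (m : ℝ≥0∞) ∧
    ∃ c : ℕ → X, c 0 = x ∧ c m = y ∧ ∀ i < m, R (c i) (c (i + 1))}

/-- If `E` is monogenic with generator `F` and path metric `d_F` on the symmetrized graph, then
for any other extended metric `d'`, `E ⊆ E^{d'}` iff `d' ≤ L · d_F` for some `L > 0`. -/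
theorem monogenic_subset_bounded_iff {X : Type*} (C : CoarseStructure X) (F : Set (X × X))
    (hF : C.sets = generatedCoarse {F})
    (d' : X → X → ℝ≥0∞) (h0 : ∀ x, d' x x = 0) (hdef : ∀ x y, d' x y = 0 → x = y)
    (hsymm : ∀ x y, d' x y = d' y x) (htri : ∀ x y z, d' x z ≤ d' x y + d' y z) :
    C.sets ⊆ boundedCoarse d' ↔
      ∃ L : ℝ≥0, 0 < L ∧ ∀ x y : X,
        d' x y ≤ (L : ℝ≥0∞) * pathMetric (fun a b => (a, b) ∈ F ∨ (b, a) ∈ F) x y := by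
  set R : X → X → Prop := fun a b => (a, b) ∈ F ∨ (b, a) ∈ F with hR
  constructor
  · intro hsub
    have hFC : F ∈ C.sets := by
      rw [hF]; intro C' hC'; exact hC' rfl
    obtain ⟨M, hM⟩ := hsub hFC
    refine ⟨M + 1, by positivity, fun x y => ?_⟩
    -- every edge has d' ≤ M
    have hedge : ∀ a b : X, R a b → d' a b ≤ (M : ℝ≥0∞) := by
      intro a b hab
      rcases hab with h | h
      · exact hM (a, b) h
      · rw [hsymm]; exact hM (b, a) h
    have hpath : ∀ (m : ℕ) (c : ℕ → X), (∀ i < m, R (c i) (c (i + 1))) →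
        d' (c 0) (c m) ≤ (m : ℝ≥0∞) * M := by
      intro m
      induction m with
      | zero => intro c _; simp [h0]
      | succ n ih =>
          intro c hc
          calc d' (c 0) (c (n + 1)) ≤ d' (c 0) (c n) + d' (c n) (c (n + 1)) := htri _ _ _
            _ ≤ (n : ℝ≥0∞) * M + M := by
                refine add_le_add (ih c fun i hi => hc i (Nat.lt_succ_of_lt hi)) ?_
                exact hedge _ _ (hc n (Nat.lt_succ_self n))
            _ = ((n + 1 : ℕ) : ℝ≥0∞) * M := by push_cast; ring
    by_cases hne : ∃ m : ℕ, ∃ c : ℕ → X, c 0 = x ∧ c m = y ∧ ∀ i < m, R (c i) (c (i + 1))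
    · classical
      let m₀ := Nat.find hne
      have hm₀ := Nat.find_spec hne
      obtain ⟨c, hc0, hcm, hcR⟩ := hm₀
      have hval : pathMetric R x y = (m₀ : ℝ≥0∞) := by
        apply le_antisymm
        · exact sInf_le ⟨m₀, rfl, c, hc0, hcm, hcR⟩
        · refine le_sInf fun n hn => ?_
          obtain ⟨m, rfl, c', hc0', hcm', hcR'⟩ := hn
          exact_mod_cast Nat.find_min' hne ⟨c', hc0', hcm', hcR'⟩
      rw [hval]
      calc d' x y = d' (c 0) (c m₀) := by rw [hc0, hcm]
        _ ≤ (m₀ : ℝ≥0∞) * M := hpath m₀ c hcR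
        _ ≤ ((M + 1 : ℝ≥0) : ℝ≥0∞) * (m₀ : ℝ≥0∞) := by
            rw [mul_comm]
            exact mul_le_mul_left (ENNReal.coe_le_coe.mpr le_self_add) _
    · have hval : pathMetric R x y = ⊤ := by
        rw [pathMetric, sInf_eq_top]
        rintro n ⟨m, rfl, c, hc0, hcm, hcR⟩
        exact absurd ⟨m, c, hc0, hcm, hcR⟩ hne
      rw [hval, ENNReal.mul_top (by exact_mod_cast (by positivity : (0:ℝ≥0) < M + 1).ne')]
      exact le_top
  · rintro ⟨L, hL, hLd⟩
    -- boundedCoarse d' is a coarse structure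
    let C' : CoarseStructure X :=
      { sets := boundedCoarse d'
        diag_mem := ⟨0, fun p hp => by
          simp only [Set.mem_setOf_eq] at hp; rw [hp, h0]; simp⟩
        subset_mem := fun E G ⟨M, hM⟩ hGE => ⟨M, fun p hp => hM p (hGE hp)⟩
        union_mem := fun E G ⟨M, hM⟩ ⟨N, hN⟩ =>
          ⟨max M N, fun p hp => hp.elim
            (fun h => (hM p h).trans (by exact_mod_cast le_max_left M N))
            (fun h => (hN p h).trans (by exact_mod_cast le_max_right M N))⟩
        inv_mem := fun E ⟨M, hM⟩ => ⟨M, fun p hp => by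
          rw [hsymm]; exact hM (p.2, p.1) hp⟩
        comp_mem := fun E G ⟨M, hM⟩ ⟨N, hN⟩ =>
          ⟨M + N, fun p hp => by
            obtain ⟨y, h1, h2⟩ := hp
            calc d' p.1 p.2 ≤ d' p.1 y + d' y p.2 := htri _ _ _
              _ ≤ (M : ℝ≥0∞) + N := add_le_add (hM _ h1) (hN _ h2)
              _ = ((M + N : ℝ≥0) : ℝ≥0∞) := by push_cast; ring⟩ }
    have hFmem : F ∈ C'.sets := by
      refine ⟨L, fun p hp => ?_⟩
      have h1 : pathMetric R p.1 p.2 ≤ 1 := by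
        refine sInf_le ⟨1, by norm_num, fun i => if i = 0 then p.1 else p.2, rfl, by norm_num,
          fun i hi => ?_⟩
        interval_cases i
        simpa using Or.inl hp
      calc d' p.1 p.2 ≤ (L : ℝ≥0∞) * pathMetric R p.1 p.2 := hLd _ _
        _ ≤ (L : ℝ≥0∞) * 1 := mul_le_mul_right h1 _
        _ = (L : ℝ≥0∞) := mul_one _
    intro E hE
    rw [hF] at hE
    exact hE C' (Set.singleton_subset_iff.mpr hFmem)
end

section
/- If a coarse structure E on X is monogenic with two generators F and G, then there exists a constant K > 0 such that (1/K)·d_G(x,y) ≤ d_F(x,y) ≤ K·d_G(x,y) for all x, y ∈ X, where d_F, d_G are the respective graph path metrics. -/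
open scoped ENNReal NNReal

/-! The bounded coarse structure of `d_G` is a coarse structure containing `G`, hence it contains
the coarse structure generated by `G`, which is `C` and contains `F`: every `F`-edge has
`d_G`-length at most some `M`. Following an `F`-path edge by edge gives `d_G ≤ M * d_F`, and
exchanging the roles of `F` and `G` gives the other inequality. -/

section PathMetric

variable {X : Type*} {R S : X → X → Prop} {x y z : X} {m k : ℕ} {c c₁ c₂ : ℕ → X}

def IsPath (R : X → X → Prop) (x y : X) (m : ℕ) (c : ℕ → X) : Prop :=
  c 0 = x ∧ c m = y ∧ ∀ i < m, R (c i) (c (i + 1))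

theorem isPath_zero (x : X) : IsPath R x x 0 fun _ => x :=
  ⟨rfl, rfl, by simp⟩

theorem isPath_one (h : R x y) : IsPath R x y 1 fun i => if i = 0 then x else y := by
  refine ⟨rfl, rfl, fun i hi => ?_⟩
  obtain rfl : i = 0 := by omega
  simpa using h

theorem IsPath.append (h₁ : IsPath R x y m c₁) (h₂ : IsPath R y z k c₂) :
    IsPath R x z (m + k) fun i => if i ≤ m then c₁ i else c₂ (i - m) := by
  obtain ⟨hx, hy, hc₁⟩ := h₁
  obtain ⟨hy', hz, hc₂⟩ := h₂
  have tail : ∀ j, m ≤ j → (if j ≤ m then c₁ j else c₂ (j - m)) = c₂ (j - m) := by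
    intro j hj
    split_ifs with hjm
    · obtain rfl : j = m := le_antisymm hjm hj
      simp [hy, hy']
    · rfl
  refine ⟨by simp [hx], ?_, fun i hi => ?_⟩
  · dsimp only
    rw [tail _ le_self_add, Nat.add_sub_cancel_left, hz]
  dsimp only
  rcases lt_or_ge i m with him | hmi
  · simpa only [him.le, Nat.succ_le_of_lt him, if_true] using hc₁ i him
  · rw [tail i hmi, tail (i + 1) (by omega), Nat.sub_add_comm hmi]
    exact hc₂ _ (by omega)

theorem IsPath.reverse (hR : ∀ a b, R a b → R b a) (h : IsPath R x y m c) :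
    IsPath R y x m fun i => c (m - i) := by
  obtain ⟨hx, hy, hc⟩ := h
  refine ⟨by simpa using hy, by simpa using hx, fun i hi => hR _ _ ?_⟩
  have := hc (m - (i + 1)) (by omega)
  rwa [show m - (i + 1) + 1 = m - i by omega] at this

theorem pathMetric_eq_iInf (R : X → X → Prop) (x y : X) :
    pathMetric R x y = ⨅ (m : ℕ) (c : ℕ → X) (_ : IsPath R x y m c), (m : ℝ≥0∞) := by
  refine le_antisymm (le_iInf₂ fun m c => le_iInf fun h => sInf_le ⟨m, rfl, c, h⟩) (le_sInf ?_)
  rintro _ ⟨m, rfl, c, h⟩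
  exact iInf₂_le_of_le m c (iInf_le _ h)

theorem pathMetric_le (h : IsPath R x y m c) : pathMetric R x y ≤ m :=
  sInf_le ⟨m, rfl, c, h⟩

theorem pathMetric_self (x : X) : pathMetric R x x = 0 :=
  nonpos_iff_eq_zero.1 (by simpa using pathMetric_le (isPath_zero (R := R) x))

theorem pathMetric_le_one (h : R x y) : pathMetric R x y ≤ 1 := by
  simpa using pathMetric_le (isPath_one h)

theorem pathMetric_triangle (x y z : X) :
    pathMetric R x z ≤ pathMetric R x y + pathMetric R y z := by
  simp only [pathMetric_eq_iInf R x y, pathMetric_eq_iInf R y z, ENNReal.iInf_add, ENNReal.add_iInf]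
  refine le_iInf₂ fun k c₂ => le_iInf fun h₂ => le_iInf₂ fun m c₁ => le_iInf fun h₁ => ?_
  exact_mod_cast pathMetric_le (h₁.append h₂)

theorem pathMetric_comm (hR : ∀ a b, R a b → R b a) (x y : X) :
    pathMetric R x y = pathMetric R y x := by
  suffices ∀ x y, pathMetric R y x ≤ pathMetric R x y from le_antisymm (this y x) (this x y)
  intro x y
  rw [pathMetric_eq_iInf R x y]
  exact le_iInf₂ fun m c => le_iInf fun h => pathMetric_le (h.reverse hR)

theorem pathMetric_le_mul_of_forall_step {M : ℝ≥0∞} (c : ℕ → X) (m : ℕ)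
    (h : ∀ i < m, pathMetric S (c i) (c (i + 1)) ≤ M) :
    pathMetric S (c 0) (c m) ≤ m * M := by
  induction m with
  | zero => simp [pathMetric_self]
  | succ n ih =>
    calc pathMetric S (c 0) (c (n + 1))
        ≤ pathMetric S (c 0) (c n) + pathMetric S (c n) (c (n + 1)) := pathMetric_triangle _ _ _
      _ ≤ n * M + M := add_le_add (ih fun i hi => h i (by omega)) (h n (by omega))
      _ = (n + 1 : ℕ) * M := by push_cast; ring

theorem pathMetric_le_mul_pathMetric {M : ℝ≥0} (hM₀ : M ≠ 0)
    (hM : ∀ a b, R a b → pathMetric S a b ≤ M) (x y : X) :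
    pathMetric S x y ≤ M * pathMetric R x y := by
  simp only [pathMetric_eq_iInf R x y,
    ENNReal.mul_iInf_of_ne (ENNReal.coe_ne_zero.2 hM₀) ENNReal.coe_ne_top]
  refine le_iInf₂ fun m c => le_iInf fun ⟨hx, hy, hc⟩ => ?_
  rw [← hx, ← hy, mul_comm]
  exact pathMetric_le_mul_of_forall_step c m fun i hi => hM _ _ (hc i hi)

end PathMetric

section Coarse

variable {X : Type*}

def boundedCoarseStructure (d : X → X → ℝ≥0∞) (hself : ∀ x, d x x = 0)
    (hcomm : ∀ x y, d x y = d y x) (htriangle : ∀ x y z, d x z ≤ d x y + d y z) :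
    CoarseStructure X where
  sets := boundedCoarse d
  diag_mem := ⟨0, fun p (hp : p.1 = p.2) => by simp [hp, hself]⟩
  subset_mem _ _ := fun ⟨M, hM⟩ hFE => ⟨M, fun p hp => hM p (hFE hp)⟩
  union_mem _ _ := fun ⟨M, hM⟩ ⟨N, hN⟩ =>
    ⟨max M N, fun p hp => hp.elim
      (fun h => (hM p h).trans (by exact_mod_cast le_max_left M N))
      (fun h => (hN p h).trans (by exact_mod_cast le_max_right M N))⟩
  inv_mem _ := fun ⟨M, hM⟩ => ⟨M, fun p hp => hcomm p.1 p.2 ▸ hM _ hp⟩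
  comp_mem _ _ := fun ⟨M, hM⟩ ⟨N, hN⟩ =>
    ⟨M + N, fun p ⟨y, h₁, h₂⟩ => by
      calc d p.1 p.2 ≤ d p.1 y + d y p.2 := htriangle _ _ _
        _ ≤ M + N := add_le_add (hM _ h₁) (hN _ h₂)
        _ = ((M + N : ℝ≥0) : ℝ≥0∞) := by push_cast; rfl⟩

theorem subset_generatedCoarse (S : Set (Set (X × X))) : S ⊆ generatedCoarse S :=
  fun _ hE _ hS => hS hE

theorem generatedCoarse_subset {S : Set (Set (X × X))} {C : CoarseStructure X}
    (h : S ⊆ C.sets) : generatedCoarse S ⊆ C.sets :=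
  fun _ hE => hE C h

theorem generatedCoarse_singleton_subset_boundedCoarse (G : Set (X × X)) :
    generatedCoarse {G} ⊆ boundedCoarse (pathMetric fun a b => (a, b) ∈ G ∨ (b, a) ∈ G) :=
  generatedCoarse_subset (C := boundedCoarseStructure _ pathMetric_self
      (pathMetric_comm fun _ _ => Or.symm) pathMetric_triangle) <|
    Set.singleton_subset_iff.2 ⟨1, fun _ hp => by
      rw [ENNReal.coe_one]; exact pathMetric_le_one (Or.inl hp)⟩

theorem exists_pathMetric_le_mul_of_mem_generatedCoarse {F G : Set (X × X)}
    (hF : F ∈ generatedCoarse {G}) :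
    ∃ K : ℝ≥0, 0 < K ∧ ∀ x y : X,
      pathMetric (fun a b => (a, b) ∈ G ∨ (b, a) ∈ G) x y ≤
        K * pathMetric (fun a b => (a, b) ∈ F ∨ (b, a) ∈ F) x y := by
  obtain ⟨M, hM⟩ := generatedCoarse_singleton_subset_boundedCoarse G hF
  have hM₁ : (M : ℝ≥0∞) ≤ (M + 1 : ℝ≥0) := by exact_mod_cast le_self_add
  refine ⟨M + 1, by positivity, pathMetric_le_mul_pathMetric (by positivity) ?_⟩
  rintro a b (hab | hba)
  · exact (hM _ hab).trans hM₁
  · rw [pathMetric_comm fun _ _ => Or.symm]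
    exact (hM _ hba).trans hM₁

end Coarse

/-- If a monogenic coarse structure has two generators `F` and `G`, then the corresponding graph
path metrics are equivalent up to a multiplicative constant `K`. -/
theorem generators_path_metrics_equivalent {X : Type*} (C : CoarseStructure X)
    (F G : Set (X × X))
    (hF : C.sets = generatedCoarse {F}) (hG : C.sets = generatedCoarse {G}) :
    ∃ K : ℝ≥0, 0 < K ∧ ∀ x y : X,
      (K : ℝ≥0∞)⁻¹ * pathMetric (fun a b => (a, b) ∈ G ∨ (b, a) ∈ G) x y ≤
          pathMetric (fun a b => (a, b) ∈ F ∨ (b, a) ∈ F) x y ∧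
        pathMetric (fun a b => (a, b) ∈ F ∨ (b, a) ∈ F) x y ≤
          (K : ℝ≥0∞) * pathMetric (fun a b => (a, b) ∈ G ∨ (b, a) ∈ G) x y := by
  have hFG : F ∈ generatedCoarse {G} := hG ▸ hF ▸ subset_generatedCoarse {F} rfl
  have hGF : G ∈ generatedCoarse {F} := hF ▸ hG ▸ subset_generatedCoarse {G} rfl
  obtain ⟨K₁, hK₁, hGle⟩ := exists_pathMetric_le_mul_of_mem_generatedCoarse hFG
  obtain ⟨K₂, hK₂, hFle⟩ := exists_pathMetric_le_mul_of_mem_generatedCoarse hGF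
  refine ⟨K₁ + K₂, add_pos hK₁ hK₂, fun x y => ⟨?_, ?_⟩⟩
  · rw [ENNReal.inv_mul_le_iff (ENNReal.coe_ne_zero.2 (add_pos hK₁ hK₂).ne') ENNReal.coe_ne_top]
    exact (hGle x y).trans (by gcongr; exact le_self_add)
  · exact (hFle x y).trans (by gcongr; exact le_add_self)
end

section
/- Let φ, ψ: A → B be norm-one linear maps whose correlation coarse structures E_φ and E_ψ are both monogenic, and let L be the length of the largest open interval contained in the intersection of their stable ranges. If ‖φ − ψ‖ < L/6, then E_φ = E_ψ. -/
/-- The universal coarse structure of a real-valued function `f` on `X × X`. -/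
def univCoarseR {X : Type*} (f : X → X → ℝ) : Set (Set (X × X)) :=
  ⋃ (ε : ℝ) (_ : 0 < ε), generatedCoarse {{p : X × X | ε ≤ f p.1 p.2}}

noncomputable def corrFn {X A B : Type*} [NormedRing A] [NormedAlgebra ℂ A]
    [NormedRing B] [NormedAlgebra ℂ B]
    (Ax : X → Subalgebra ℂ A) (φ : A →L[ℂ] B) (x y : X) : ℝ :=
  ⨆ p : {a : A // a ∈ Ax x ∧ ‖a‖ ≤ 1} × {b : A // b ∈ Ax y ∧ ‖b‖ ≤ 1},
    ‖φ (p.1.1 * p.2.1) - φ p.1.1 * φ p.2.1‖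

/-- The stable range of `φ`: those `ε > 0` with `E_φ = ⟨{C_φ ≥ ε}⟩`. -/
def stableRange {X A B : Type*} [NormedRing A] [NormedAlgebra ℂ A]
    [NormedRing B] [NormedAlgebra ℂ B]
    (Ax : X → Subalgebra ℂ A) (φ : A →L[ℂ] B) : Set ℝ :=
  {ε : ℝ | 0 < ε ∧
    univCoarseR (corrFn Ax φ) = generatedCoarse {{p : X × X | ε ≤ corrFn Ax φ p.1 p.2}}}

lemma gen_mono {X : Type*} {F G : Set (X × X)} (h : F ⊆ G) :
    generatedCoarse {F} ⊆ generatedCoarse {G} := by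
  intro E hE C hC
  refine hE C fun s hs => ?_
  rw [Set.mem_singleton_iff] at hs
  rw [hs]
  exact C.subset_mem G F (hC rfl) h

lemma key_bound {A B : Type*} [NormedRing A] [NormedAlgebra ℂ A]
    [NormedRing B] [NormedAlgebra ℂ B] (φ ψ : A →L[ℂ] B)
    (hφ : ‖φ‖ ≤ 1) (hψ : ‖ψ‖ ≤ 1) (a b : A) (ha : ‖a‖ ≤ 1) (hb : ‖b‖ ≤ 1) :
    ‖φ (a * b) - φ a * φ b‖ ≤ ‖ψ (a * b) - ψ a * ψ b‖ + 3 * ‖φ - ψ‖ := by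
  have ha0 : (0:ℝ) ≤ ‖a‖ := norm_nonneg _
  have hb0 : (0:ℝ) ≤ ‖b‖ := norm_nonneg _
  have hab : ‖a * b‖ ≤ 1 := le_trans (norm_mul_le a b) (by nlinarith)
  have hfa : ‖φ a‖ ≤ 1 := le_trans (φ.le_opNorm a) (by nlinarith)
  have hgb : ‖ψ b‖ ≤ 1 := le_trans (ψ.le_opNorm b) (by nlinarith)
  have hd : (0:ℝ) ≤ ‖φ - ψ‖ := norm_nonneg _
  have h1 : ‖(φ - ψ) (a*b)‖ ≤ ‖φ - ψ‖ := le_trans ((φ - ψ).le_opNorm _)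
    (by nlinarith [ (φ - ψ).opNorm_nonneg ])
  have h2 : ‖φ a * ((φ - ψ) b)‖ ≤ ‖φ - ψ‖ := by
    refine le_trans (norm_mul_le _ _) ?_
    have := (φ - ψ).le_opNorm b
    nlinarith [norm_nonneg ((φ - ψ) b)]
  have h3 : ‖((φ - ψ) a) * ψ b‖ ≤ ‖φ - ψ‖ := by
    refine le_trans (norm_mul_le _ _) ?_
    have := (φ - ψ).le_opNorm a
    nlinarith [norm_nonneg ((φ - ψ) a)]
  have heq : φ (a*b) - φ a * φ b - (ψ (a*b) - ψ a * ψ b)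
      = (φ - ψ) (a*b) - φ a * ((φ - ψ) b) - ((φ - ψ) a) * ψ b := by
    simp only [ContinuousLinearMap.sub_apply, mul_sub, sub_mul]; abel
  have htri : ‖φ (a*b) - φ a * φ b - (ψ (a*b) - ψ a * ψ b)‖ ≤ 3 * ‖φ - ψ‖ := by
    rw [heq]
    calc ‖(φ - ψ) (a*b) - φ a * ((φ - ψ) b) - ((φ - ψ) a) * ψ b‖
        ≤ ‖(φ - ψ) (a*b) - φ a * ((φ - ψ) b)‖ + ‖((φ - ψ) a) * ψ b‖ := norm_sub_le _ _
      _ ≤ ‖(φ - ψ) (a*b)‖ + ‖φ a * ((φ - ψ) b)‖ + ‖((φ - ψ) a) * ψ b‖ := by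
            gcongr; exact norm_sub_le _ _
      _ ≤ 3 * ‖φ - ψ‖ := by linarith
  have h0 : φ (a*b) - φ a * φ b
      = (ψ (a*b) - ψ a * ψ b) + (φ (a*b) - φ a * φ b - (ψ (a*b) - ψ a * ψ b)) := by abel
  have h5 := norm_add_le (ψ (a*b) - ψ a * ψ b) (φ (a*b) - φ a * φ b - (ψ (a*b) - ψ a * ψ b))
  rw [← h0] at h5
  linarith

lemma corr_nonempty {X A : Type*} [NormedRing A] [NormedAlgebra ℂ A]
    (Ax : X → Subalgebra ℂ A) (x : X) : Nonempty {a : A // a ∈ Ax x ∧ ‖a‖ ≤ 1} :=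
  ⟨⟨0, (Ax x).zero_mem, by simp⟩⟩

lemma corr_bdd {X A B : Type*} [NormedRing A] [NormedAlgebra ℂ A]
    [NormedRing B] [NormedAlgebra ℂ B]
    (Ax : X → Subalgebra ℂ A) (ψ : A →L[ℂ] B) (hψ : ‖ψ‖ ≤ 1) (x y : X) :
    BddAbove (Set.range fun p : {a : A // a ∈ Ax x ∧ ‖a‖ ≤ 1} × {b : A // b ∈ Ax y ∧ ‖b‖ ≤ 1}
      => ‖ψ (p.1.1 * p.2.1) - ψ p.1.1 * ψ p.2.1‖) := by
  refine ⟨2, ?_⟩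
  rintro r ⟨p, rfl⟩
  obtain ⟨⟨a, _, ha⟩, ⟨b, _, hb⟩⟩ := p
  have ha0 : (0:ℝ) ≤ ‖a‖ := norm_nonneg _
  have hb0 : (0:ℝ) ≤ ‖b‖ := norm_nonneg _
  have hab1 : ‖a * b‖ ≤ 1 := le_trans (norm_mul_le a b) (by nlinarith)
  have hab : ‖ψ (a*b)‖ ≤ 1 := le_trans (ψ.le_opNorm _) (by nlinarith [ψ.opNorm_nonneg])
  have h5 : ‖ψ a‖ ≤ 1 := le_trans (ψ.le_opNorm a) (by nlinarith [ψ.opNorm_nonneg])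
  have h6 : ‖ψ b‖ ≤ 1 := le_trans (ψ.le_opNorm b) (by nlinarith [ψ.opNorm_nonneg])
  have h2 : ‖ψ a * ψ b‖ ≤ 1 := le_trans (norm_mul_le _ _)
    (by nlinarith [norm_nonneg (ψ a), norm_nonneg (ψ b)])
  calc ‖ψ (a*b) - ψ a * ψ b‖ ≤ ‖ψ (a*b)‖ + ‖ψ a * ψ b‖ := norm_sub_le _ _
    _ ≤ 2 := by linarith

lemma corrFn_le {X A B : Type*} [NormedRing A] [NormedAlgebra ℂ A]
    [NormedRing B] [NormedAlgebra ℂ B]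
    (Ax : X → Subalgebra ℂ A) (φ ψ : A →L[ℂ] B) (hφ : ‖φ‖ ≤ 1) (hψ : ‖ψ‖ ≤ 1) (x y : X) :
    corrFn Ax φ x y ≤ corrFn Ax ψ x y + 3 * ‖φ - ψ‖ := by
  have := corr_nonempty Ax x; have := corr_nonempty Ax y
  refine ciSup_le fun p => ?_
  refine le_trans (key_bound φ ψ hφ hψ p.1.1 p.2.1 p.1.2.2 p.2.2.2) ?_
  gcongr
  exact le_ciSup (corr_bdd Ax ψ hψ x y) p

/-- If `E_φ` and `E_ψ` are monogenic, `(a,b)` is an open interval of length `L` contained in the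
intersection of the stable ranges, and `‖φ − ψ‖ < L/6`, then `E_φ = E_ψ`. -/
theorem univCoarse_eq_of_close {X A B : Type*}
    [NormedRing A] [StarRing A] [CStarRing A] [NormedAlgebra ℂ A] [CompleteSpace A]
    [NormedRing B] [NormedAlgebra ℂ B] [CompleteSpace B]
    (Ax : X → Subalgebra ℂ A) (φ ψ : A →L[ℂ] B) (hφ : ‖φ‖ = 1) (hψ : ‖ψ‖ = 1)
    (hmφ : ∃ F : Set (X × X), univCoarseR (corrFn Ax φ) = generatedCoarse {F})
    (hmψ : ∃ F : Set (X × X), univCoarseR (corrFn Ax ψ) = generatedCoarse {F})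
    (a b L : ℝ) (hL : L = b - a)
    (hI : Set.Ioo a b ⊆ stableRange Ax φ ∩ stableRange Ax ψ)
    (hclose : ‖φ - ψ‖ < L / 6) :
    univCoarseR (corrFn Ax φ) = univCoarseR (corrFn Ax ψ) := by
  have hd0 : (0:ℝ) ≤ ‖φ - ψ‖ := norm_nonneg _
  have hrev : ‖ψ - φ‖ = ‖φ - ψ‖ := norm_sub_rev ψ φ
  have hLpos : 0 < L := by linarith
  have hε1 : a + 2*L/3 ∈ Set.Ioo a b := ⟨by linarith, by rw [hL]; linarith⟩
  have hε2 : a + 2*L/3 - 3*‖φ - ψ‖ ∈ Set.Ioo a b := ⟨by linarith, by rw [hL]; linarith⟩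
  apply Set.Subset.antisymm
  · rw [(hI hε1).1.2, (hI hε2).2.2]
    apply gen_mono
    intro p hp
    have h := corrFn_le Ax φ ψ hφ.le hψ.le p.1 p.2
    simp only [Set.mem_setOf_eq] at hp ⊢
    linarith
  · rw [(hI hε1).2.2, (hI hε2).1.2]
    apply gen_mono
    intro p hp
    have h := corrFn_le Ax ψ φ hψ.le hφ.le p.1 p.2
    rw [hrev] at h
    simp only [Set.mem_setOf_eq] at hp ⊢
    linarith
end

section
/- If E is a proper coarse structure on a countable set X and C ⊆ X is any finite subset, then the connected completion E_con equals the coarse structure generated by the restriction E|_{(X−C)×(X−C)} together with all finite subsets of X × X. -/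
/-- Properness of a collection of controlled sets: every bounded set (i.e. `B` with
`B × B` controlled) is finite. -/
def IsProperCol {X : Type*} (S : Set (Set (X × X))) : Prop :=
  ∀ B : Set X, B ×ˢ B ∈ S → B.Finite

/-- For a proper coarse structure `𝓔` on a countable set and a finite subset `C`, the connected
completion `𝓔_con` (generated by `𝓔` and all finite subsets of `X × X`) equals the coarse
structure generated by the restriction of `𝓔` to `(X−C) × (X−C)` together with all finite
subsets. -/
theorem connected_completion_eq_of_proper {X : Type*} [Countable X]
    (𝓔 : CoarseStructure X) (hP : IsProperCol 𝓔.sets) (C : Set X) (hC : C.Finite) :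
    generatedCoarse (𝓔.sets ∪ {E : Set (X × X) | E.Finite}) =
      generatedCoarse ((𝓔.sets ∩ {E : Set (X × X) | E ⊆ Cᶜ ×ˢ Cᶜ}) ∪
        {E : Set (X × X) | E.Finite}) := by
  ext E
  constructor
  · intro hE C' hS
    apply hE
    rintro e (he | he)
    · -- e ∈ 𝓔.sets : decompose
      -- boundary part is finite
      have hFin : (e \ (Cᶜ ×ˢ Cᶜ)).Finite := by
        set F : Set (X × X) :=
          (e ∪ {p : X × X | (p.2, p.1) ∈ e}) ∪ {p : X × X | p.1 = p.2} with hF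
        have hFmem : F ∈ 𝓔.sets :=
          𝓔.union_mem _ _ (𝓔.union_mem _ _ he (𝓔.inv_mem _ he)) 𝓔.diag_mem
        have hB : ∀ c : X, ({x : X | (c, x) ∈ F}).Finite := by
          intro c
          apply hP
          have : {x : X | (c, x) ∈ F} ×ˢ {x : X | (c, x) ∈ F} ⊆
              {p : X × X | ∃ y, (p.1, y) ∈ {q : X × X | (q.2, q.1) ∈ F} ∧ (y, p.2) ∈ F} := by
            rintro ⟨x, y⟩ ⟨hx, hy⟩
            exact ⟨c, hx, hy⟩
          exact 𝓔.subset_mem _ _ (𝓔.comp_mem _ _ (𝓔.inv_mem _ hFmem) hFmem) this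
        have hsub : e \ (Cᶜ ×ˢ Cᶜ) ⊆
            ⋃ c ∈ C, ({c} ×ˢ {x : X | (c, x) ∈ F} ∪ {x : X | (c, x) ∈ F} ×ˢ {c}) := by
          rintro ⟨a, b⟩ ⟨hab, hnot⟩
          have h1 : a ∈ C ∨ b ∈ C := by
            by_contra h
            push_neg at h
            exact hnot ⟨h.1, h.2⟩
          rcases h1 with h1 | h1
          · refine Set.mem_biUnion h1 (Or.inl ⟨rfl, ?_⟩)
            exact Or.inl (Or.inl hab)
          · refine Set.mem_biUnion h1 (Or.inr ⟨?_, rfl⟩)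
            exact Or.inl (Or.inr hab)
        refine Set.Finite.subset ?_ hsub
        exact hC.biUnion fun c _ =>
          (((Set.finite_singleton c).prod (hB c)).union ((hB c).prod (Set.finite_singleton c)))
      have h1 : e ∩ (Cᶜ ×ˢ Cᶜ) ∈ C'.sets := by
        apply hS
        exact Or.inl ⟨𝓔.subset_mem _ _ he Set.inter_subset_left, Set.inter_subset_right⟩
      have h2 : e \ (Cᶜ ×ˢ Cᶜ) ∈ C'.sets := hS (Or.inr hFin)
      have := C'.union_mem _ _ h1 h2
      rwa [Set.inter_union_diff] at this
    · exact hS (Or.inr he)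
  · intro hE C' hS
    apply hE
    rintro e (he | he)
    · exact hS (Or.inl he.1)
    · exact hS (Or.inr he)
end
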